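/- arXiv:1606.00996 — 4 statements merged into one kernel-verified Lean document; each statement's English description precedes it below -/
import Mathlib

section
/- With A, B finite nonempty sets, |A ∩ B| = n, |A ∪ B| = u, and i.i.d. Uniform(0,1) hash values h on A ∪ B, letting x_A, x_B be the maxima over A and B, one has E[x_A · x_B · 1_{x_A = x_B}] = n/(u+2). -/
/-!
Almost surely the values of `h` on `A ∪ B` are pairwise distinct, since independent variables
with an atomless law never tie. On that event `x_A = x_B` holds exactly when the maximiser `e` of
`h` over `A ∪ B` lies in `A ∩ B`, and then `x_A x_B = h(e)²`; so the integrand is a.s.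
`∑_{e ∈ A ∩ B} h(e)² 1{e maximises h on A ∪ B}`. Conditioning on `h(e) = x`, each summand has
expectation `∫₀¹ x² x^(u-1) dx = 1/(u+2)`.
-/

open MeasureTheory ProbabilityTheory

namespace Finset

variable {ι α : Type*} [LinearOrder α] {w : ι → α} {e : ι}

theorem sup'_eq_of_isMaxOn {s : Finset ι} (hs : s.Nonempty) {t : Set ι} (hst : ↑s ⊆ t)
    (hmax : IsMaxOn w t e) (he : e ∈ s) : s.sup' hs w = w e :=
  le_antisymm (sup'_le hs w fun _ hi => hmax (hst hi)) (le_sup' w he)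

variable [DecidableEq ι] {A B : Finset ι} (hA : A.Nonempty) (hB : B.Nonempty)

theorem sup'_eq_sup'_iff_exists_isMaxOn (hw : Set.InjOn w ↑(A ∪ B)) :
    A.sup' hA w = B.sup' hB w ↔ ∃ e ∈ A ∩ B, IsMaxOn w ↑(A ∪ B) e := by
  constructor
  · intro hAB
    obtain ⟨a, ha, hAa⟩ := exists_mem_eq_sup' hA w
    obtain ⟨b, hb, hBb⟩ := exists_mem_eq_sup' hB w
    have hab : a = b := hw (mem_union_left B ha) (mem_union_right A hb) (hAa ▸ hBb ▸ hAB)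
    subst hab
    refine ⟨a, mem_inter.2 ⟨ha, hb⟩, fun i hi => ?_⟩
    rcases mem_union.1 hi with hi | hi
    · exact hAa ▸ le_sup' w hi
    · exact hBb ▸ le_sup' w hi
  · rintro ⟨e, he, hmax⟩
    rw [mem_inter] at he
    rw [sup'_eq_of_isMaxOn hA (by simp) hmax he.1, sup'_eq_of_isMaxOn hB (by simp) hmax he.2]

theorem ite_sup'_eq_sum_indicator_isMaxOn [Semiring α]
    (hw : Set.InjOn w ↑(A ∪ B)) :
    (if A.sup' hA w = B.sup' hB w then A.sup' hA w * B.sup' hB w else 0)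
      = ∑ e ∈ A ∩ B, {v : ι → α | IsMaxOn v ↑(A ∪ B) e}.indicator (fun v => v e ^ 2) w := by
  by_cases hex : ∃ e ∈ A ∩ B, IsMaxOn w ↑(A ∪ B) e
  · obtain ⟨e, he, hmax⟩ := hex
    have hAB := (sup'_eq_sup'_iff_exists_isMaxOn hA hB hw).2 ⟨e, he, hmax⟩
    rw [mem_inter] at he
    have hAe := sup'_eq_of_isMaxOn hA (by simp) hmax he.1
    rw [if_pos hAB, ← hAB, hAe, sum_eq_single_of_mem e (mem_inter.2 he),
      Set.indicator_of_mem (by exact hmax), sq]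
    intro e' he' hne
    have he'U : e' ∈ A ∪ B := mem_union_left B (mem_inter.1 he').1
    have heU : e ∈ A ∪ B := mem_union_left B he.1
    exact Set.indicator_of_notMem
      (by exact fun hmax' => hne (hw he'U heU (le_antisymm (hmax he'U) (hmax' heU)))) _
  · rw [if_neg ((sup'_eq_sup'_iff_exists_isMaxOn hA hB hw).not.2 hex),
      sum_eq_zero fun e he => Set.indicator_of_notMem (by exact fun hmax => hex ⟨e, he, hmax⟩) _]

end Finset

namespace ProbabilityTheory

variable {Ω α : Type*} [MeasurableSpace Ω] {μ : Measure Ω}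

theorem IndepFun.ae_ne [MeasurableSpace α] [MeasurableEq α] [IsFiniteMeasure μ] {X Y : Ω → α}
    (hXY : IndepFun X Y μ) (hX : AEMeasurable X μ) (hY : AEMeasurable Y μ)
    [NullSingletonClass (μ.map X)] : ∀ᵐ ω ∂μ, X ω ≠ Y ω := by
  have hpair : AEMeasurable (fun ω => (X ω, Y ω)) μ := hX.prodMk hY
  rw [ae_iff]
  simp only [ne_eq, not_not]
  calc μ {ω | X ω = Y ω} = μ.map (fun ω => (X ω, Y ω)) (Set.diagonal α) := by
        rw [Measure.map_apply_of_aemeasurable hpair measurableSet_diagonal]; rfl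
    _ = ∫⁻ y, μ.map X {y} ∂μ.map Y := by
        rw [(indepFun_iff_map_prod_eq_prod_map_map hX hY).1 hXY,
          Measure.prod_apply_symm measurableSet_diagonal]
        rfl
    _ = 0 := by simp

theorem iIndepFun.ae_injective {κ : Type*} [Countable κ] [IsFiniteMeasure μ] [MeasurableSpace α]
    [MeasurableEq α] {X : κ → Ω → α} (hindep : iIndepFun X μ) (hX : ∀ i, AEMeasurable (X i) μ)
    [∀ i, NullSingletonClass (μ.map (X i))] : ∀ᵐ ω ∂μ, Function.Injective (X · ω) := by
  have hne : ∀ i j, ∀ᵐ ω ∂μ, i ≠ j → X i ω ≠ X j ω := by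
    intro i j
    by_cases hij : i = j
    · exact ae_of_all _ fun _ h => absurd hij h
    · filter_upwards [(hindep.indepFun hij).ae_ne (hX i) (hX j)] with ω hω _ using hω
  filter_upwards [ae_all_iff.2 fun i => ae_all_iff.2 (hne i)] with ω hω i j
  exact fun hXij => by_contra fun hij => hω i j hij hXij

end ProbabilityTheory

namespace MeasureTheory.Measure

variable {κ α : Type*} [Fintype κ] [DecidableEq κ] [MeasurableSpace α]

theorem map_update_prod_pi (μ : κ → Measure α) [∀ i, IsProbabilityMeasure (μ i)] (e : κ) :
    ((Measure.pi μ).prod (μ e)).map (fun p => Function.update p.1 e p.2) = Measure.pi μ := by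
  refine (Measure.pi_eq fun s hs => ?_).symm
  have hpre : (fun p : (κ → α) × α => Function.update p.1 e p.2) ⁻¹' Set.univ.pi s
      = Set.univ.pi (Function.update s e Set.univ) ×ˢ s e := by
    ext ⟨w, x⟩
    simp only [Set.mem_preimage, Set.mem_univ_pi, Set.mem_prod, Function.update_apply]
    grind
  rw [map_apply measurable_update' (.univ_pi hs), hpre, prod_prod, pi_pi,
    ← Finset.mul_prod_erase _ _ (Finset.mem_univ e),
    ← Finset.mul_prod_erase _ _ (Finset.mem_univ e)]
  simp only [Function.update_self, measure_univ, one_mul, mul_comm]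
  congr 1
  exact Finset.prod_congr rfl fun i hi => by rw [Function.update_of_ne (Finset.ne_of_mem_erase hi)]

end MeasureTheory.Measure

instance : IsProbabilityMeasure (volume.restrict (Set.Ioo (0 : ℝ) 1)) :=
  ⟨by simp [Real.volume_Ioo]⟩

theorem volume_restrict_Ioo_Iic {x : ℝ} (hx : x < 1) :
    volume.restrict (Set.Ioo 0 1) (Set.Iic x) = ENNReal.ofReal x := by
  have : Set.Iic x ∩ Set.Ioo 0 1 = Set.Ioc 0 x := by
    ext y
    simp only [Set.mem_inter_iff, Set.mem_Iic, Set.mem_Ioo, Set.mem_Ioc]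
    grind
  rw [Measure.restrict_apply measurableSet_Iic, this, Real.volume_Ioc, sub_zero]

theorem lintegral_Ioo_zero_one_pow (n : ℕ) :
    ∫⁻ x in Set.Ioo 0 1, ENNReal.ofReal (x ^ n) = ENNReal.ofReal (1 / (n + 1)) := by
  have hint : IntegrableOn (fun x : ℝ => x ^ n) (Set.Ioo 0 1) := by
    rw [← intervalIntegrable_iff_integrableOn_Ioo_of_le zero_le_one]
    exact intervalIntegral.intervalIntegrable_pow n
  rw [← ofReal_integral_eq_lintegral_ofReal hint
      ((ae_restrict_mem measurableSet_Ioo).mono fun x hx => pow_nonneg hx.1.le n),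
    ← integral_Ioc_eq_integral_Ioo, ← intervalIntegral.integral_of_le zero_le_one, integral_pow]
  norm_num

theorem measurableSet_setOf_isMaxOn_univ {κ : Type*} [Countable κ] (e : κ) :
    MeasurableSet {v : κ → ℝ | IsMaxOn v Set.univ e} := by
  simp_rw [isMaxOn_univ_iff, Set.ofPred_forall]
  exact .iInter fun i => measurableSet_le (measurable_pi_apply i) (measurable_pi_apply e)

theorem pi_uniform_univ_pi_update_Iic {κ : Type*} [Fintype κ] [DecidableEq κ] (e : κ) {x : ℝ}
    (hx : x < 1) :
    Measure.pi (fun _ : κ => volume.restrict (Set.Ioo (0 : ℝ) 1))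
        (Set.univ.pi (Function.update (fun _ => Set.Iic x) e Set.univ))
      = ENNReal.ofReal x ^ (Fintype.card κ - 1) := by
  rw [Measure.pi_pi, ← Finset.mul_prod_erase _ _ (Finset.mem_univ e), Function.update_self,
    measure_univ, one_mul, Finset.prod_congr rfl fun i hi => by
      rw [Function.update_of_ne (Finset.ne_of_mem_erase hi), volume_restrict_Ioo_Iic hx],
    Finset.prod_const, Finset.card_erase_of_mem (Finset.mem_univ e), Finset.card_univ]

theorem lintegral_pi_uniform_indicator_isMaxOn {κ : Type*} [Fintype κ] (e : κ) :
    ∫⁻ v, {v : κ → ℝ | IsMaxOn v Set.univ e}.indicator (fun v => ENNReal.ofReal (v e ^ 2)) v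
      ∂Measure.pi (fun _ => volume.restrict (Set.Ioo (0 : ℝ) 1))
      = ENNReal.ofReal (1 / (Fintype.card κ + 2)) := by
  classical
  set ν := volume.restrict (Set.Ioo (0 : ℝ) 1)
  set F := {v : κ → ℝ | IsMaxOn v Set.univ e}.indicator (fun v => ENNReal.ofReal (v e ^ 2))
  have hF : Measurable F := ((measurable_pi_apply e).pow_const 2).ennreal_ofReal.indicator
    (measurableSet_setOf_isMaxOn_univ e)
  have hslice : ∀ x ∈ Set.Ioo (0 : ℝ) 1,
      ∫⁻ w, F (Function.update w e x) ∂Measure.pi (fun _ => ν)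
        = ENNReal.ofReal (x ^ (Fintype.card κ + 1)) := by
    intro x hx
    have hbox : (fun w => F (Function.update w e x))
        = (Set.univ.pi (Function.update (fun _ => Set.Iic x) e Set.univ)).indicator
          (fun _ => ENNReal.ofReal (x ^ 2)) := by
      ext w
      simp only [F, Set.indicator_apply, Set.mem_ofPred_eq, isMaxOn_univ_iff, Set.mem_univ_pi,
        Function.update_self, Function.update_apply]
      refine if_congr (forall_congr' fun i => ?_) rfl rfl
      split_ifs <;> simp [*]
    have hcard : 1 ≤ Fintype.card κ := Fintype.card_pos_iff.2 ⟨e⟩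
    rw [hbox, lintegral_indicator_const (.univ_pi fun i => by
        rcases eq_or_ne i e with rfl | hi <;> simp [*]), pi_uniform_univ_pi_update_Iic e hx.2,
      ← ENNReal.ofReal_pow hx.1.le, ← ENNReal.ofReal_mul (by positivity), ← pow_add]
    congr 2
    omega
  rw [← Measure.map_update_prod_pi (fun _ => ν) e, lintegral_map hF measurable_update',
    lintegral_prod_symm (fun p => F (Function.update p.1 e p.2))
      (hF.comp measurable_update').aemeasurable,
    setLIntegral_congr_fun measurableSet_Ioo hslice, lintegral_Ioo_zero_one_pow]
  congr 2
  push_cast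
  ring

theorem integral_indicator_isMaxOn_sq_of_iIndepFun {Ω κ : Type*} [MeasurableSpace Ω]
    {μ : Measure Ω} [IsProbabilityMeasure μ] [Fintype κ] {X : κ → Ω → ℝ} (hindep : iIndepFun X μ)
    (hunif : ∀ i, μ.map (X i) = volume.restrict (Set.Ioo 0 1)) (e : κ) :
    ∫ ω, {ω | IsMaxOn (X · ω) Set.univ e}.indicator (fun ω => X e ω ^ 2) ω ∂μ
      = 1 / (Fintype.card κ + 2) := by
  have hX : ∀ i, AEMeasurable (X i) μ := fun i =>
    .of_map_ne_zero (by rw [hunif i]; exact IsProbabilityMeasure.ne_zero _)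
  have hlaw : μ.map (fun ω i => X i ω) = Measure.pi fun _ => volume.restrict (Set.Ioo 0 1) := by
    rw [(iIndepFun_iff_map_fun_eq_pi_map hX).1 hindep]
    simp_rw [hunif]
  set F := {v : κ → ℝ | IsMaxOn v Set.univ e}.indicator (fun v => v e ^ 2)
  have hF : Measurable F :=
    ((measurable_pi_apply e).pow_const 2).indicator (measurableSet_setOf_isMaxOn_univ e)
  calc ∫ ω, {ω | IsMaxOn (X · ω) Set.univ e}.indicator (fun ω => X e ω ^ 2) ω ∂μ
      = ∫ ω, F (fun i => X i ω) ∂μ := rfl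
    _ = ∫ v, F v ∂Measure.pi fun _ => volume.restrict (Set.Ioo 0 1) := by
      rw [← hlaw, integral_map (aemeasurable_pi_lambda _ hX) hF.aestronglyMeasurable]
    _ = (∫⁻ v, ENNReal.ofReal (F v) ∂Measure.pi fun _ => volume.restrict (Set.Ioo 0 1)).toReal :=
      integral_eq_lintegral_of_nonneg_ae
        (ae_of_all _ (Set.indicator_nonneg fun v _ => sq_nonneg (v e))) hF.aestronglyMeasurable
    _ = 1 / (Fintype.card κ + 2) := by
      have hofReal : (fun v => ENNReal.ofReal (F v))
          = {v : κ → ℝ | IsMaxOn v Set.univ e}.indicator (fun v => ENNReal.ofReal (v e ^ 2)) :=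
        (Set.indicator_comp_of_zero ENNReal.ofReal_zero).symm
      rw [hofReal, lintegral_pi_uniform_indicator_isMaxOn, ENNReal.toReal_ofReal (by positivity)]

theorem exp_prod_indicator_eq_general
    {Ω ι : Type*} [MeasureSpace Ω] [IsProbabilityMeasure (ℙ : Measure Ω)]
    [DecidableEq ι]
    (A B : Finset ι) (hA : A.Nonempty) (hB : B.Nonempty)
    (h : ι → Ω → ℝ)
    (hindep : iIndepFun
      (fun e : {x // x ∈ A ∪ B} => h e.1) ℙ)
    (hunif : ∀ e ∈ A ∪ B, Measure.map (h e) ℙ = volume.restrict (Set.Ioo (0 : ℝ) 1))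
    (xA xB : Ω → ℝ)
    (hxA : ∀ ω, xA ω = A.sup' hA fun e => h e ω)
    (hxB : ∀ ω, xB ω = B.sup' hB fun e => h e ω) :
    ∫ ω, (if xA ω = xB ω then xA ω * xB ω else 0) ∂ℙ
      = ((A ∩ B).card : ℝ) / ((A ∪ B).card + 2) := by
  have hX : ∀ i : {x // x ∈ A ∪ B}, AEMeasurable (h i.1) ℙ := fun i =>
    .of_map_ne_zero (by rw [hunif i.1 i.2]; exact IsProbabilityMeasure.ne_zero _)
  have hatomless : ∀ i : {x // x ∈ A ∪ B}, NullSingletonClass (Measure.map (h i.1) ℙ) := fun i => by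
    rw [hunif i.1 i.2]; infer_instance
  have hinj : ∀ᵐ ω ∂ℙ, Set.InjOn (h · ω) ↑(A ∪ B) := by
    filter_upwards [hindep.ae_injective hX] with ω hω using Set.injOn_iff_injective.2 hω
  have hterm : ∀ e ∈ A ∩ B,
      ∫ ω, {ω | IsMaxOn (h · ω) ↑(A ∪ B) e}.indicator (fun ω => h e ω ^ 2) ω ∂ℙ
        = 1 / ((A ∪ B).card + 2) := by
    intro e he
    have heU : e ∈ A ∪ B := Finset.mem_union_left B (Finset.mem_inter.1 he).1
    rw [← Fintype.card_coe, ← integral_indicator_isMaxOn_sq_of_iIndepFun hindep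
      (fun i => hunif i.1 i.2) ⟨e, heU⟩]
    simp [isMaxOn_iff]
  calc ∫ ω, (if xA ω = xB ω then xA ω * xB ω else 0) ∂ℙ
      = ∫ ω, ∑ e ∈ A ∩ B,
          {ω | IsMaxOn (h · ω) ↑(A ∪ B) e}.indicator (fun ω => h e ω ^ 2) ω ∂ℙ :=
        integral_congr_ae (hinj.mono fun ω hω => by
          simp only [hxA, hxB]
          exact Finset.ite_sup'_eq_sum_indicator_isMaxOn hA hB hω)
    _ = ∑ e ∈ A ∩ B,
          ∫ ω, {ω | IsMaxOn (h · ω) ↑(A ∪ B) e}.indicator (fun ω => h e ω ^ 2) ω ∂ℙ :=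
        integral_finsetSum _ fun e he =>
          Integrable.of_integral_ne_zero (by rw [hterm e he]; positivity)
    _ = ((A ∩ B).card : ℝ) / ((A ∪ B).card + 2) := by
      rw [Finset.sum_congr rfl hterm, Finset.sum_const, nsmul_eq_mul, mul_one_div]

theorem exp_prod_indicator_eq
    {Ω ι : Type*} [MeasureSpace Ω] [IsProbabilityMeasure (ℙ : Measure Ω)]
    [DecidableEq ι]
    (A B : Finset ι) (hA : A.Nonempty) (hB : B.Nonempty)
    (h : ι → Ω → ℝ)
    (hmeas : ∀ e, Measurable (h e))
    (hindep : iIndepFun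
      (fun e : {x // x ∈ A ∪ B} => h e.1) ℙ)
    (hunif : ∀ e ∈ A ∪ B, Measure.map (h e) ℙ = volume.restrict (Set.Ioo (0 : ℝ) 1))
    (xA xB : Ω → ℝ)
    (hxA : ∀ ω, xA ω = A.sup' hA fun e => h e ω)
    (hxB : ∀ ω, xB ω = B.sup' hB fun e => h e ω)
    (hn : (A ∩ B).Nonempty) :
    ∫ ω, (if xA ω = xB ω then xA ω * xB ω else 0) ∂ℙ
      = ((A ∩ B).card : ℝ) / ((A ∪ B).card + 2) :=
  exp_prod_indicator_eq_general A B hA hB h hindep hunif xA xB hxA hxB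
end

section
/- With A, B finite nonempty sets, |A| = a, |B \ A| = β ≥ 1, |A ∪ B| = u, and i.i.d. Uniform(0,1) hash values h on A ∪ B, letting x_A, x_B be the maxima over A and B, one has E[x_A · x_B · 1_{x_A < x_B}] = (a/(a+1)) · (β/(u+2)). -/
/-!
Let `y` be the maximum of the hash values over `B \ A`. Since `x_B = max x_A y`, the event
`x_A < x_B` is the event `x_A < y`, on which `x_B = y`. Being maxima over disjoint blocks of
independent uniforms, `x_A` and `y` are independent, and multiplying the CDFs shows that the maximum
of `n` such uniforms has density `n t^(n-1)` on `(0,1)`. Hence the expectation is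
`∫₀¹ β y^(β-1) y ∫₀^y a x^(a-1) x dx dy = aβ/(a+1) ∫₀¹ y^(a+β+1) dy = aβ/((a+1)(a+β+2))`,
and `a + β = u`.
-/

open MeasureTheory ProbabilityTheory Set

noncomputable def maxUniformLaw (n : ℕ) : Measure ℝ :=
  (volume.restrict (Ioo 0 1)).withDensity fun x => ENNReal.ofReal (n * x ^ (n - 1))

lemma integrableOn_natCast_mul_pow_sub_one (n : ℕ) (a b : ℝ) :
    IntegrableOn (fun x : ℝ => n * x ^ (n - 1)) (Ioo a b) :=
  (by fun_prop : Continuous fun x : ℝ => n * x ^ (n - 1)).integrableOn_Icc.mono_set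
    Ioo_subset_Icc_self

lemma integral_natCast_mul_pow_sub_one {n : ℕ} (hn : n ≠ 0) (c : ℝ) :
    ∫ x in 0..c, (n : ℝ) * x ^ (n - 1) = c ^ n := by
  obtain ⟨m, rfl⟩ := Nat.exists_eq_succ_of_ne_zero hn
  rw [intervalIntegral.integral_const_mul, integral_pow]
  push_cast
  field_simp
  simp

lemma lintegral_Ioo_zero_ofReal_natCast_mul_pow_sub_one {n : ℕ} (hn : n ≠ 0) (c : ℝ) :
    ∫⁻ x in Ioo 0 c, ENNReal.ofReal (n * x ^ (n - 1)) = ENNReal.ofReal c ^ n := by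
  rcases le_or_gt c 0 with hc | hc
  · rw [Ioo_eq_empty hc.not_gt, Measure.restrict_empty, lintegral_zero_measure,
      ENNReal.ofReal_of_nonpos hc, zero_pow hn]
  rw [← ofReal_integral_eq_lintegral_ofReal (integrableOn_natCast_mul_pow_sub_one n 0 c),
    ← integral_Ioc_eq_integral_Ioo, ← intervalIntegral.integral_of_le hc.le,
    integral_natCast_mul_pow_sub_one hn, ENNReal.ofReal_pow hc.le]
  filter_upwards [ae_restrict_mem measurableSet_Ioo] with x hx
  have := hx.1.le
  positivity

instance (n : ℕ) : IsFiniteMeasure (maxUniformLaw n) :=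
  isFiniteMeasure_withDensity_ofReal (integrableOn_natCast_mul_pow_sub_one n 0 1).2

lemma Iic_inter_Ioo_ae_eq {α : Type*} [LinearOrder α] [MeasurableSpace α] {μ : Measure α}
    [NullSingletonClass μ] (t a b : α) :
    (Iic t ∩ Ioo a b : Set α) =ᵐ[μ] Ioo a (min t b) := by
  rw [← Iio_inter_Ioo]
  exact Iio_ae_eq_Iic.symm.inter (by rfl)

lemma volume_restrict_Ioo_zero_one_Iic (t : ℝ) :
    volume.restrict (Ioo 0 1) (Iic t) = ENNReal.ofReal (min t 1) := by
  rw [Measure.restrict_apply measurableSet_Iic, measure_congr (Iic_inter_Ioo_ae_eq t 0 1),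
    Real.volume_Ioo, sub_zero]

lemma maxUniformLaw_Iic {n : ℕ} (hn : n ≠ 0) (t : ℝ) :
    maxUniformLaw n (Iic t) = ENNReal.ofReal (min t 1) ^ n := by
  rw [maxUniformLaw, withDensity_apply _ measurableSet_Iic,
    Measure.restrict_restrict measurableSet_Iic, setLIntegral_congr (Iic_inter_Ioo_ae_eq t 0 1),
    lintegral_Ioo_zero_ofReal_natCast_mul_pow_sub_one hn]

lemma ae_mem_Ioo_maxUniformLaw (n : ℕ) : ∀ᵐ x ∂maxUniformLaw n, x ∈ Ioo 0 1 :=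
  (withDensity_absolutelyContinuous _ _).ae_le (ae_restrict_mem measurableSet_Ioo)

lemma integral_maxUniformLaw (n : ℕ) (f : ℝ → ℝ) :
    ∫ x, f x ∂maxUniformLaw n = ∫ x in Ioo 0 1, n * x ^ (n - 1) * f x := by
  rw [maxUniformLaw, integral_withDensity_eq_integral_toReal_smul (by fun_prop)
    (ae_of_all _ fun _ => ENNReal.ofReal_lt_top)]
  refine setIntegral_congr_fun measurableSet_Ioo fun x hx => ?_
  have := hx.1.le
  rw [ENNReal.toReal_ofReal (by positivity), smul_eq_mul]

lemma setIntegral_Ioo_ite_lt {a b y : ℝ} (hy : y ∈ Icc a b) (g : ℝ → ℝ) :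
    ∫ x in Ioo a b, (if x < y then g x else 0) = ∫ x in a..y, g x := by
  have hind : (fun x => if x < y then g x else 0) = (Iio y).indicator g := by
    ext x
    simp [indicator_apply]
  rw [hind, setIntegral_indicator measurableSet_Iio, Ioo_inter_Iio, min_eq_right hy.2,
    ← integral_Ioc_eq_integral_Ioo, ← intervalIntegral.integral_of_le hy.1]

lemma integral_ite_lt_mul_maxUniformLaw (n : ℕ) {y : ℝ} (hy : y ∈ Icc 0 1) :
    ∫ x, (if x < y then x * y else 0) ∂maxUniformLaw n = n / (n + 1) * y ^ (n + 2) := by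
  simp only [integral_maxUniformLaw, mul_ite, mul_zero]
  rw [setIntegral_Ioo_ite_lt hy]
  rcases n with _ | m
  · simp
  calc ∫ x in 0..y, ((m + 1 : ℕ) : ℝ) * x ^ (m + 1 - 1) * (x * y)
      = ∫ x in 0..y, ((m + 1) * y) * x ^ (m + 1) := by
        congr 1 with x
        push_cast
        ring
    _ = _ := by
      rw [intervalIntegral.integral_const_mul, integral_pow]
      push_cast
      field_simp
      ring

lemma measurable_ite_lt_mul : Measurable fun z : ℝ × ℝ => if z.1 < z.2 then z.1 * z.2 else 0 :=
  Measurable.ite (measurableSet_lt measurable_fst measurable_snd) (by fun_prop) measurable_const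

lemma integrable_ite_lt_mul_prod_maxUniformLaw (a b : ℕ) :
    Integrable (fun z : ℝ × ℝ => if z.1 < z.2 then z.1 * z.2 else 0)
      ((maxUniformLaw a).prod (maxUniformLaw b)) := by
  refine Integrable.mono' (integrable_const 1) measurable_ite_lt_mul.aestronglyMeasurable ?_
  filter_upwards [Measure.quasiMeasurePreserving_fst.ae (ae_mem_Ioo_maxUniformLaw a),
    Measure.quasiMeasurePreserving_snd.ae (ae_mem_Ioo_maxUniformLaw b)] with z hx hy
  split_ifs
  · rw [norm_mul, Real.norm_of_nonneg hx.1.le, Real.norm_of_nonneg hy.1.le]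
    exact mul_le_one₀ hx.2.le hy.1.le hy.2.le
  · simp

lemma integral_ite_lt_mul_prod_maxUniformLaw (a b : ℕ) :
    ∫ z, (if z.1 < z.2 then z.1 * z.2 else 0) ∂(maxUniformLaw a).prod (maxUniformLaw b)
      = a / (a + 1) * (b / (a + b + 2)) := by
  rw [integral_prod_symm _ (integrable_ite_lt_mul_prod_maxUniformLaw a b),
    integral_maxUniformLaw,
    setIntegral_congr_fun measurableSet_Ioo fun y hy => by
      rw [integral_ite_lt_mul_maxUniformLaw a (Ioo_subset_Icc_self hy)],
    ← integral_Ioc_eq_integral_Ioo, ← intervalIntegral.integral_of_le zero_le_one]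
  rcases b with _ | m
  · simp
  calc ∫ y in 0..1, ((m + 1 : ℕ) : ℝ) * y ^ (m + 1 - 1) * (a / (a + 1) * y ^ (a + 2))
      = ∫ y in 0..1, (a * (m + 1) / (a + 1)) * y ^ (a + m + 2) := by
        congr 1 with y
        push_cast
        ring
    _ = _ := by
      rw [intervalIntegral.integral_const_mul, integral_pow]
      push_cast
      field_simp
      ring

lemma Finset.measurable_sup'' {α δ ι : Type*} [MeasurableSpace α] [SemilatticeSup α]
    [MeasurableSup₂ α] [MeasurableSpace δ] {s : Finset ι} (hs : s.Nonempty) {f : ι → δ → α}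
    (hf : ∀ i ∈ s, Measurable (f i)) :
    Measurable fun x => s.sup' hs fun i => f i x := by
  convert Finset.measurable_sup' hs hf using 1
  exact funext fun x => (Finset.sup'_apply hs f x).symm

lemma Finset.Nonempty.subtype {ι : Type*} {p : ι → Prop} [DecidablePred p] {s : Finset ι}
    (hs : s.Nonempty) (hp : ∀ x ∈ s, p x) : (s.subtype p).Nonempty :=
  let ⟨x, hx⟩ := hs
  ⟨⟨x, hp x hx⟩, Finset.mem_subtype.2 hx⟩

lemma Finset.sup'_subtype {α ι : Type*} [SemilatticeSup α] {p : ι → Prop} [DecidablePred p]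
    {s : Finset ι} (hp : ∀ x ∈ s, p x) (hs : s.Nonempty) (g : ι → α) :
    (s.subtype p).sup' (hs.subtype hp) (fun i => g i) = s.sup' hs g :=
  (Finset.sup'_comp_eq_map (f := .subtype p) g _).trans
    (Finset.sup'_congr _ (subtype_map_of_mem hp) fun _ _ => rfl)

lemma Finset.card_subtype_of_mem {ι : Type*} {p : ι → Prop} [DecidablePred p] {s : Finset ι}
    (hp : ∀ x ∈ s, p x) : (s.subtype p).card = s.card := by
  rw [← card_map (.subtype p), subtype_map_of_mem hp]

lemma ite_lt_eq_of_le_of_le_max {α β : Type*} [LinearOrder α] {x y z : α} (hyz : y ≤ z)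
    (hz : z ≤ max x y) (f : α → β) (c : β) :
    (if x < z then f z else c) = if x < y then f y else c := by
  by_cases hxy : x < y
  · rw [le_antisymm (hz.trans (max_eq_right hxy.le).le) hyz]
  · have hzx : ¬ x < z := not_lt.2 (hz.trans (max_eq_left (not_lt.1 hxy)).le)
    rw [if_neg hzx, if_neg hxy]

lemma Finset.ite_lt_sup'_eq_ite_lt_sup'_sdiff {ι α β : Type*} [DecidableEq ι] [LinearOrder α]
    {A B : Finset ι} (hA : A.Nonempty) (hB : B.Nonempty) (hBA : (B \ A).Nonempty) (g : ι → α)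
    (f : α → β) (c : β) :
    (if A.sup' hA g < B.sup' hB g then f (B.sup' hB g) else c) =
      if A.sup' hA g < (B \ A).sup' hBA g then f ((B \ A).sup' hBA g) else c :=
  ite_lt_eq_of_le_of_le_max (Finset.sup'_mono g sdiff_subset hBA)
    ((Finset.sup'_mono g le_sup_sdiff hB).trans_eq (Finset.sup'_union hA hBA g)) f c

namespace ProbabilityTheory

variable {Ω κ : Type*} [MeasurableSpace Ω] {μ : Measure Ω} {X : κ → Ω → ℝ}

lemma iIndepFun.map_sup'_eq_maxUniformLaw (hX : iIndepFun X μ) (hXm : ∀ i, Measurable (X i))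
    {T : Finset κ} (hT : T.Nonempty)
    (hunif : ∀ i ∈ T, μ.map (X i) = volume.restrict (Ioo 0 1)) :
    μ.map (fun ω => T.sup' hT (X · ω)) = maxUniformLaw T.card := by
  have := hX.isProbabilityMeasure
  refine Measure.ext_of_Iic _ _ fun t => ?_
  have hcdf : ∀ i ∈ T, μ (X i ⁻¹' Iic t) = ENNReal.ofReal (min t 1) := fun i hi => by
    rw [← Measure.map_apply (hXm i) measurableSet_Iic, hunif i hi,
      volume_restrict_Ioo_zero_one_Iic]
  have hpre : (fun ω => T.sup' hT (X · ω)) ⁻¹' Iic t = ⋂ i ∈ T, X i ⁻¹' Iic t := by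
    ext ω
    simp [Finset.sup'_le_iff]
  rw [Measure.map_apply (Finset.measurable_sup'' hT fun i _ => hXm i) measurableSet_Iic,
    maxUniformLaw_Iic hT.card_pos.ne', hpre,
    hX.measure_inter_preimage_eq_mul T fun _ _ => measurableSet_Iic,
    Finset.prod_congr rfl hcdf, Finset.prod_const]

lemma iIndepFun.indepFun_sup'_sup' (hX : iIndepFun X μ) (hXm : ∀ i, Measurable (X i))
    {S T : Finset κ} (hST : Disjoint S T) (hS : S.Nonempty) (hT : T.Nonempty) :
    IndepFun (fun ω => S.sup' hS (X · ω)) (fun ω => T.sup' hT (X · ω)) μ := by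
  have hmax {U : Finset κ} (hU : U.Nonempty) :
      Measurable fun v : U → ℝ => U.attach.sup' hU.attach v :=
    Finset.measurable_sup'' _ fun i _ => measurable_pi_apply i
  have hsup {U : Finset κ} (hU : U.Nonempty) (ω : Ω) :
      U.attach.sup' hU.attach (fun i => X i ω) = U.sup' hU (X · ω) :=
    (Finset.sup'_comp_eq_map (f := .subtype _) (X · ω) hU.attach).trans
      (Finset.sup'_congr _ Finset.attach_map_val fun _ _ => rfl)
  convert (hX.indepFun_finset S T hST hXm).comp (hmax hS) (hmax hT) using 1 <;>
    exact funext fun ω => (hsup _ ω).symm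

variable {ι : Type*} [DecidableEq ι] {U : Finset ι} {Y : ι → Ω → ℝ}

lemma iIndepFun.map_sup'_eq_maxUniformLaw_of_subset (hY : iIndepFun (fun i : U => Y i) μ)
    (hYm : ∀ i, Measurable (Y i)) {T : Finset ι} (hTU : T ⊆ U) (hT : T.Nonempty)
    (hunif : ∀ i ∈ T, μ.map (Y i) = volume.restrict (Ioo 0 1)) :
    μ.map (fun ω => T.sup' hT (Y · ω)) = maxUniformLaw T.card := by
  have := hY.map_sup'_eq_maxUniformLaw (fun i => hYm i) (hT.subtype hTU)
    fun i hi => hunif i (Finset.mem_subtype.1 hi)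
  rwa [funext fun ω => Finset.sup'_subtype hTU hT (Y · ω), Finset.card_subtype_of_mem hTU] at this

lemma iIndepFun.indepFun_sup'_sup'_of_subset (hY : iIndepFun (fun i : U => Y i) μ)
    (hYm : ∀ i, Measurable (Y i)) {S T : Finset ι} (hSU : S ⊆ U) (hTU : T ⊆ U)
    (hST : Disjoint S T) (hS : S.Nonempty) (hT : T.Nonempty) :
    IndepFun (fun ω => S.sup' hS (Y · ω)) (fun ω => T.sup' hT (Y · ω)) μ := by
  have := hY.indepFun_sup'_sup' (fun i => hYm i) (Finset.disjoint_left.2 fun i hiS hiT =>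
    Finset.disjoint_left.1 hST (Finset.mem_subtype.1 hiS) (Finset.mem_subtype.1 hiT))
    (hS.subtype hSU) (hT.subtype hTU)
  rwa [funext fun ω => Finset.sup'_subtype hSU hS (Y · ω),
    funext fun ω => Finset.sup'_subtype hTU hT (Y · ω)] at this

end ProbabilityTheory

theorem exp_prod_indicator_lt_general
    {Ω ι : Type*} [MeasureSpace Ω]
    [DecidableEq ι]
    (A B : Finset ι) (hA : A.Nonempty) (hB : B.Nonempty)
    (h : ι → Ω → ℝ)
    (hmeas : ∀ e, Measurable (h e))
    (hindep : iIndepFun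
      (fun e : {x // x ∈ A ∪ B} => h e.1) ℙ)
    (hunif : ∀ e ∈ A ∪ B, Measure.map (h e) ℙ = volume.restrict (Set.Ioo (0 : ℝ) 1))
    (xA xB : Ω → ℝ)
    (hxA : ∀ ω, xA ω = A.sup' hA fun e => h e ω)
    (hxB : ∀ ω, xB ω = B.sup' hB fun e => h e ω)
    (hβ : (B \ A).Nonempty) :
    ∫ ω, (if xA ω < xB ω then xA ω * xB ω else 0) ∂ℙ
      = ((A.card : ℝ) / (A.card + 1)) * (((B \ A).card : ℝ) / ((A ∪ B).card + 2)) := by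
  have := hindep.isProbabilityMeasure
  set y : Ω → ℝ := fun ω => (B \ A).sup' hβ fun e => h e ω
  have hxA' : xA = fun ω => A.sup' hA fun e => h e ω := funext hxA
  have hpt (ω : Ω) : (if xA ω < xB ω then xA ω * xB ω else 0) =
      if xA ω < y ω then xA ω * y ω else 0 := by
    rw [hxA, hxB]
    exact Finset.ite_lt_sup'_eq_ite_lt_sup'_sdiff hA hB hβ _ _ 0
  have hAU : A ⊆ A ∪ B := Finset.subset_union_left
  have hCU : B \ A ⊆ A ∪ B := Finset.sdiff_subset.trans Finset.subset_union_right
  have hlawA : Measure.map xA ℙ = maxUniformLaw A.card := hxA' ▸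
    hindep.map_sup'_eq_maxUniformLaw_of_subset hmeas hAU hA fun e he => hunif e (hAU he)
  have hlawC : Measure.map y ℙ = maxUniformLaw (B \ A).card :=
    hindep.map_sup'_eq_maxUniformLaw_of_subset hmeas hCU hβ fun e he => hunif e (hCU he)
  have hindAC : IndepFun xA y ℙ := hxA' ▸
    hindep.indepFun_sup'_sup'_of_subset hmeas hAU hCU Finset.disjoint_sdiff hA hβ
  have hxAm : Measurable xA := hxA' ▸ Finset.measurable_sup'' hA fun e _ => hmeas e
  have hym : Measurable y := Finset.measurable_sup'' hβ fun e _ => hmeas e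
  calc ∫ ω, (if xA ω < xB ω then xA ω * xB ω else 0) ∂ℙ
      = ∫ z, (if z.1 < z.2 then z.1 * z.2 else 0) ∂Measure.map (fun ω => (xA ω, y ω)) ℙ := by
        rw [integral_map (hxAm.prodMk hym).aemeasurable measurable_ite_lt_mul.aestronglyMeasurable]
        exact integral_congr_ae (ae_of_all _ hpt)
    _ = _ := by
      rw [hindAC.map_prod_eq_prod_map_map hxAm.aemeasurable hym.aemeasurable, hlawA, hlawC,
        integral_ite_lt_mul_prod_maxUniformLaw, Finset.union_comm, ← Finset.card_sdiff_add_card]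
      push_cast
      ring

theorem exp_prod_indicator_lt
    {Ω ι : Type*} [MeasureSpace Ω] [IsProbabilityMeasure (ℙ : Measure Ω)]
    [DecidableEq ι]
    (A B : Finset ι) (hA : A.Nonempty) (hB : B.Nonempty)
    (h : ι → Ω → ℝ)
    (hmeas : ∀ e, Measurable (h e))
    (hindep : iIndepFun
      (fun e : {x // x ∈ A ∪ B} => h e.1) ℙ)
    (hunif : ∀ e ∈ A ∪ B, Measure.map (h e) ℙ = volume.restrict (Set.Ioo (0 : ℝ) 1))
    (xA xB : Ω → ℝ)
    (hxA : ∀ ω, xA ω = A.sup' hA fun e => h e ω)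
    (hxB : ∀ ω, xB ω = B.sup' hB fun e => h e ω)
    (hβ : (B \ A).Nonempty) :
    ∫ ω, (if xA ω < xB ω then xA ω * xB ω else 0) ∂ℙ
      = ((A.card : ℝ) / (A.card + 1)) * (((B \ A).card : ℝ) / ((A ∪ B).card + 2)) :=
  exp_prod_indicator_lt_general A B hA hB h hmeas hindep hunif xA xB hxA hxB hβ
end

section
/- With the setup of i.i.d. Uniform(0,1) hash values on A ∪ B and maxima x_A over A and x_B over B, where |A| = a, |B| = b, |A ∩ B| = n, |A ∪ B| = u, the covariance satisfies Cov(x_A, x_B) = n/((u+2)(a+1)(b+1)). -/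
/-!
Both maxima lie in `[0, 1]`, where Hoeffding's identity
`Cov(X, Y) = ∫∫_{[0,1]²} (P(X ≤ s, Y ≤ t) - P(X ≤ s) P(Y ≤ t)) ds dt` holds: `1 - x` is the
length of `[x, 1]`, so `Cov(X, Y) = Cov(1 - X, 1 - Y)` is computed by Fubini. With
`p = |A \ B|`, `q = |B \ A|`, `n = |A ∩ B|`, independence gives
`P(x_A ≤ s, x_B ≤ t) = s^p t^q min(s, t)^n` and `P(x_A ≤ s) = s^a`, and
`∫∫ s^p t^q min(s, t)^n = (1/(a+1) + 1/(b+1)) / (u+2)`; the covariance is this minus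
`1/((a+1)(b+1))`, which is `n/((u+2)(a+1)(b+1))` because `a + b - u = n`.
-/

open MeasureTheory ProbabilityTheory Set

theorem Finset.prod_union_ite_mem {ι M : Type*} [DecidableEq ι] [CommMonoid M]
    (A B : Finset ι) (x y z : M) :
    ∏ e ∈ A ∪ B, (if e ∈ A then (if e ∈ B then z else x) else y)
      = x ^ (A \ B).card * y ^ (B \ A).card * z ^ (A ∩ B).card := by
  rw [prod_ite, prod_ite, prod_const, prod_const, prod_const]
  have hmemA : {e ∈ A ∪ B | e ∈ A} = A := by ext; simp
  have hnotMemA : {e ∈ A ∪ B | e ∉ A} = B \ A := by ext; simp; tauto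
  rw [hmemA, hnotMemA, filter_mem_eq_inter, filter_notMem_eq_sdiff]
  exact mul_rotate _ _ _

theorem integral_Icc_pow (k : ℕ) : ∫ s in Icc (0:ℝ) 1, s ^ k = 1 / (k + 1) := by
  rw [integral_Icc_eq_integral_Ioc, ← intervalIntegral.integral_of_le zero_le_one,
    integral_pow]
  norm_num

theorem integral_pow_mul_min_pow {s : ℝ} (hs : s ∈ Icc 0 1) (q n : ℕ) :
    ∫ t in (0:ℝ)..1, t ^ q * min s t ^ n
      = s ^ (q + n + 1) / (q + n + 1) + s ^ n * (1 - s ^ (q + 1)) / (q + 1) := by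
  have hcont : Continuous fun t : ℝ => t ^ q * min s t ^ n := by fun_prop
  rw [← intervalIntegral.integral_add_adjacent_intervals (b := s)
    (hcont.intervalIntegrable 0 s) (hcont.intervalIntegrable s 1)]
  have hlow : ∫ t in (0:ℝ)..s, t ^ q * min s t ^ n = ∫ t in (0:ℝ)..s, t ^ (q + n) := by
    refine intervalIntegral.integral_congr fun t ht => ?_
    rw [uIcc_of_le hs.1] at ht
    simp only [min_eq_right ht.2, pow_add]
  have hhigh : ∫ t in s..1, t ^ q * min s t ^ n = ∫ t in s..1, t ^ q * s ^ n :=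
    intervalIntegral.integral_congr fun t ht => by
      rw [uIcc_of_le hs.2] at ht
      simp only [min_eq_left ht.1]
  rw [hlow, hhigh, integral_pow, intervalIntegral.integral_mul_const, integral_pow]
  push_cast
  field_simp
  ring

theorem integral_Icc_prod_pow_mul_pow_mul_min_pow (p q n : ℕ) :
    ∫ z in Icc (0:ℝ) 1 ×ˢ Icc (0:ℝ) 1, z.1 ^ p * z.2 ^ q * min z.1 z.2 ^ n
      = (1 / (p + n + 1) + 1 / (q + n + 1)) / (p + q + n + 2) := by
  have hint : IntegrableOn (fun z : ℝ × ℝ => z.1 ^ p * z.2 ^ q * min z.1 z.2 ^ n)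
      (Icc 0 1 ×ˢ Icc 0 1) :=
    ContinuousOn.integrableOn_compact (isCompact_Icc.prod isCompact_Icc) (by fun_prop)
  rw [Measure.volume_eq_prod, setIntegral_prod _ hint]
  have hinner : ∀ s ∈ Icc (0:ℝ) 1, ∫ t in Icc (0:ℝ) 1, s ^ p * t ^ q * min s t ^ n
      = s ^ (p + q + n + 1) / (q + n + 1) + (s ^ (p + n) - s ^ (p + q + n + 1)) / (q + 1) := by
    intro s hs
    simp_rw [mul_assoc]
    rw [integral_const_mul, integral_Icc_eq_integral_Ioc,
      ← intervalIntegral.integral_of_le zero_le_one, integral_pow_mul_min_pow hs]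
    ring
  rw [setIntegral_congr_fun measurableSet_Icc hinner, integral_add, integral_div, integral_div,
    integral_sub, integral_Icc_pow, integral_Icc_pow]
  · push_cast
    field_simp
    ring
  all_goals exact Continuous.integrableOn_Icc (by fun_prop)

theorem integral_measureReal_prodMk_left_eq {α β : Type*} [MeasurableSpace α] [MeasurableSpace β]
    {μ : Measure α} {ν : Measure β} [IsFiniteMeasure μ] [IsFiniteMeasure ν]
    {s : Set (α × β)} (hs : MeasurableSet s) :
    ∫ x, ν.real (Prod.mk x ⁻¹' s) ∂μ = ∫ y, μ.real ((·, y) ⁻¹' s) ∂ν := by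
  simp only [measureReal_def]
  rw [integral_toReal (measurable_measure_prodMk_left hs).aemeasurable
      (ae_of_all _ fun _ => measure_lt_top _ _),
    integral_toReal (measurable_measure_prodMk_right hs).aemeasurable
      (ae_of_all _ fun _ => measure_lt_top _ _),
    ← Measure.prod_apply hs, ← Measure.prod_apply_symm hs]

theorem measureReal_restrict_Icc_Ici {x : ℝ} (hx : x ∈ Icc 0 1) :
    (volume.restrict (Icc 0 1)).real (Ici x) = 1 - x := by
  have hset : Ici x ∩ Icc 0 1 = Icc x 1 := by
    ext; simp only [mem_inter_iff, mem_Ici, mem_Icc]; grind [hx.1]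
  rw [measureReal_restrict_apply measurableSet_Ici, hset, Real.volume_real_Icc_of_le hx.2]

section LayerCake

variable {Ω : Type*} [MeasurableSpace Ω] {μ : Measure Ω} {X Y : Ω → ℝ}

theorem integral_one_sub_eq_integral_measureReal_le [IsFiniteMeasure μ] (hX : Measurable X)
    (hX01 : ∀ᵐ ω ∂μ, X ω ∈ Icc 0 1) :
    ∫ ω, (1 - X ω) ∂μ = ∫ s in Icc 0 1, μ.real {ω | X ω ≤ s} := by
  calc ∫ ω, (1 - X ω) ∂μ = ∫ ω, (volume.restrict (Icc 0 1)).real (Ici (X ω)) ∂μ :=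
        integral_congr_ae <| hX01.mono fun ω hω => (measureReal_restrict_Icc_Ici hω).symm
    _ = ∫ s in Icc 0 1, μ.real {ω | X ω ≤ s} :=
        integral_measureReal_prodMk_left_eq (s := {z : Ω × ℝ | X z.1 ≤ z.2})
          (measurableSet_le (hX.comp measurable_fst) measurable_snd)

theorem integral_one_sub_mul_one_sub_eq_integral_measureReal_le [IsFiniteMeasure μ]
    (hX : Measurable X) (hY : Measurable Y) (hX01 : ∀ᵐ ω ∂μ, X ω ∈ Icc 0 1)
    (hY01 : ∀ᵐ ω ∂μ, Y ω ∈ Icc 0 1) :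
    ∫ ω, (1 - X ω) * (1 - Y ω) ∂μ
      = ∫ z in Icc 0 1 ×ˢ Icc 0 1, μ.real {ω | X ω ≤ z.1 ∧ Y ω ≤ z.2} := by
  calc ∫ ω, (1 - X ω) * (1 - Y ω) ∂μ
        = ∫ ω, ((volume.restrict (Icc 0 1)).prod (volume.restrict (Icc 0 1))).real
            (Ici (X ω) ×ˢ Ici (Y ω)) ∂μ := by
        refine integral_congr_ae <| (hX01.and hY01).mono fun ω hω => ?_
        dsimp only
        rw [measureReal_prod_prod, measureReal_restrict_Icc_Ici hω.1,
          measureReal_restrict_Icc_Ici hω.2]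
    _ = ∫ z, μ.real {ω | X ω ≤ z.1 ∧ Y ω ≤ z.2}
          ∂(volume.restrict (Icc 0 1)).prod (volume.restrict (Icc 0 1)) :=
        integral_measureReal_prodMk_left_eq
          (s := {z : Ω × (ℝ × ℝ) | X z.1 ≤ z.2.1 ∧ Y z.1 ≤ z.2.2})
          ((measurableSet_le (hX.comp measurable_fst) measurable_snd.fst).inter
            (measurableSet_le (hY.comp measurable_fst) measurable_snd.snd))
    _ = _ := by rw [Measure.prod_restrict, ← Measure.volume_eq_prod]

theorem covariance_eq_integral_measureReal_le [IsProbabilityMeasure μ] (hX : Measurable X)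
    (hY : Measurable Y) (hX01 : ∀ᵐ ω ∂μ, X ω ∈ Icc 0 1) (hY01 : ∀ᵐ ω ∂μ, Y ω ∈ Icc 0 1) :
    cov[X, Y; μ] = (∫ z in Icc 0 1 ×ˢ Icc 0 1, μ.real {ω | X ω ≤ z.1 ∧ Y ω ≤ z.2})
      - (∫ s in Icc 0 1, μ.real {ω | X ω ≤ s}) * ∫ t in Icc 0 1, μ.real {ω | Y ω ≤ t} := by
  have hXint : Integrable X μ :=
    (memLp_of_bounded hX01 hX.aestronglyMeasurable 1).integrable le_rfl
  have hYint : Integrable Y μ :=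
    (memLp_of_bounded hY01 hY.aestronglyMeasurable 1).integrable le_rfl
  have h1X : ∀ᵐ ω ∂μ, 1 - X ω ∈ Icc 0 1 :=
    hX01.mono fun _ h => ⟨by linarith [h.2], by linarith [h.1]⟩
  have h1Y : ∀ᵐ ω ∂μ, 1 - Y ω ∈ Icc 0 1 :=
    hY01.mono fun _ h => ⟨by linarith [h.2], by linarith [h.1]⟩
  calc cov[X, Y; μ] = cov[fun ω => 1 - X ω, fun ω => 1 - Y ω; μ] := by
        rw [covariance_const_sub_left hXint, covariance_const_sub_right hYint, neg_neg]
    _ = ∫ ω, (1 - X ω) * (1 - Y ω) ∂μ - (∫ ω, (1 - X ω) ∂μ) * ∫ ω, (1 - Y ω) ∂μ :=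
        covariance_eq_sub (memLp_of_bounded h1X (by fun_prop) 2)
          (memLp_of_bounded h1Y (by fun_prop) 2)
    _ = _ := by
      rw [integral_one_sub_mul_one_sub_eq_integral_measureReal_le hX hY hX01 hY01,
        integral_one_sub_eq_integral_measureReal_le hX hX01,
        integral_one_sub_eq_integral_measureReal_le hY hY01]

end LayerCake

section MaxOfUniforms

variable {Ω ι : Type*} [MeasurableSpace Ω] {μ : Measure Ω} {h : ι → Ω → ℝ}

theorem measureReal_preimage_Iic_of_map_eq {X : Ω → ℝ} (hX : Measurable X)
    (hunif : μ.map X = volume.restrict (Ioo 0 1)) {r : ℝ} (hr : r ∈ Icc 0 1) :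
    μ.real (X ⁻¹' Iic r) = r := by
  have hset : Iic r ∩ Icc 0 1 = Icc 0 r := by
    ext; simp only [mem_inter_iff, mem_Iic, mem_Icc]; grind [hr.2]
  rw [← map_measureReal_apply hX measurableSet_Iic, hunif,
    Measure.restrict_congr_set Ioo_ae_eq_Icc, measureReal_restrict_apply measurableSet_Iic,
    hset, Real.volume_real_Icc_of_le hr.1, sub_zero]

theorem ae_mem_Icc_of_map_eq {X : Ω → ℝ} (hX : Measurable X)
    (hunif : μ.map X = volume.restrict (Ioo 0 1)) : ∀ᵐ ω ∂μ, X ω ∈ Icc 0 1 :=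
  ae_of_ae_map hX.aemeasurable <| hunif ▸ (ae_restrict_mem measurableSet_Ioo).mono
    fun _ h => Ioo_subset_Icc_self h

theorem ae_sup'_mem_Icc {S : Finset ι} (hS : S.Nonempty) (hmeas : ∀ e ∈ S, Measurable (h e))
    (hunif : ∀ e ∈ S, μ.map (h e) = volume.restrict (Ioo 0 1)) :
    ∀ᵐ ω ∂μ, S.sup' hS h ω ∈ Icc 0 1 := by
  filter_upwards [(Filter.eventually_all_finset S).2 fun e he =>
    ae_mem_Icc_of_map_eq (hmeas e he) (hunif e he)] with ω hω
  rw [Finset.sup'_apply]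
  exact Finset.sup'_mem (Icc 0 1) (fun x hx y hy => ⟨le_sup_of_le_left hx.1, sup_le hx.2 hy.2⟩)
    S hS _ hω

theorem measureReal_forall_le_eq_prod {S : Finset ι} (hmeas : ∀ e ∈ S, Measurable (h e))
    (hindep : iIndepFun (fun e : {x // x ∈ S} => h e.1) μ)
    (hunif : ∀ e ∈ S, μ.map (h e) = volume.restrict (Ioo 0 1))
    {r : ι → ℝ} (hr : ∀ e ∈ S, r e ∈ Icc 0 1) :
    μ.real {ω | ∀ e ∈ S, h e ω ≤ r e} = ∏ e ∈ S, r e := by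
  have hset : {ω | ∀ e ∈ S, h e ω ≤ r e} = ⋂ e : S, h e ⁻¹' Iic (r e) := by
    ext; simp
  rw [hset, measureReal_def, hindep.meas_iInter fun e => ⟨Iic (r e), measurableSet_Iic, rfl⟩,
    ENNReal.toReal_prod]
  simp_rw [← measureReal_def]
  rw [Finset.prod_coe_sort S fun e => μ.real (h e ⁻¹' Iic (r e))]
  exact Finset.prod_congr rfl fun e he =>
    measureReal_preimage_Iic_of_map_eq (hmeas e he) (hunif e he) (hr e he)

theorem measureReal_sup'_le_eq_pow {S : Finset ι} (hS : S.Nonempty)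
    (hmeas : ∀ e ∈ S, Measurable (h e))
    (hindep : iIndepFun (fun e : {x // x ∈ S} => h e.1) μ)
    (hunif : ∀ e ∈ S, μ.map (h e) = volume.restrict (Ioo 0 1)) {s : ℝ} (hs : s ∈ Icc 0 1) :
    μ.real {ω | S.sup' hS h ω ≤ s} = s ^ S.card := by
  simp only [Finset.sup'_apply, Finset.sup'_le_iff]
  rw [measureReal_forall_le_eq_prod hmeas hindep hunif fun _ _ => hs, Finset.prod_const]

theorem measureReal_sup'_le_and_sup'_le_eq [DecidableEq ι] {A B : Finset ι} (hA : A.Nonempty)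
    (hB : B.Nonempty) (hmeas : ∀ e ∈ A ∪ B, Measurable (h e))
    (hindep : iIndepFun (fun e : {x // x ∈ A ∪ B} => h e.1) μ)
    (hunif : ∀ e ∈ A ∪ B, μ.map (h e) = volume.restrict (Ioo 0 1))
    {s t : ℝ} (hs : s ∈ Icc 0 1) (ht : t ∈ Icc 0 1) :
    μ.real {ω | A.sup' hA h ω ≤ s ∧ B.sup' hB h ω ≤ t}
      = s ^ (A \ B).card * t ^ (B \ A).card * min s t ^ (A ∩ B).card := by
  set r : ι → ℝ := fun e => if e ∈ A then (if e ∈ B then min s t else s) else t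
  have hr : ∀ e ∈ A ∪ B, r e ∈ Icc 0 1 := fun e _ => by
    simp only [r]
    split_ifs
    exacts [⟨le_min hs.1 ht.1, (min_le_left _ _).trans hs.2⟩, hs, ht]
  have hset : {ω | A.sup' hA h ω ≤ s ∧ B.sup' hB h ω ≤ t}
      = {ω | ∀ e ∈ A ∪ B, h e ω ≤ r e} := by
    ext ω
    simp only [mem_ofPred_eq, Finset.sup'_apply, Finset.sup'_le_iff, Finset.mem_union, r]
    grind
  rw [hset, measureReal_forall_le_eq_prod hmeas hindep hunif hr, Finset.prod_union_ite_mem]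

theorem covariance_sup'_sup' [IsProbabilityMeasure μ] [DecidableEq ι] {A B : Finset ι}
    (hA : A.Nonempty) (hB : B.Nonempty) (hmeas : ∀ e ∈ A ∪ B, Measurable (h e))
    (hindep : iIndepFun (fun e : {x // x ∈ A ∪ B} => h e.1) μ)
    (hunif : ∀ e ∈ A ∪ B, μ.map (h e) = volume.restrict (Ioo 0 1)) :
    cov[A.sup' hA h, B.sup' hB h; μ]
      = (A ∩ B).card / (((A ∪ B).card + 2) * (A.card + 1) * (B.card + 1)) := by
  have hAB : A ⊆ A ∪ B := Finset.subset_union_left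
  have hBA : B ⊆ A ∪ B := Finset.subset_union_right
  have hindepA : iIndepFun (fun e : {x // x ∈ A} => h e.1) μ :=
    hindep.precomp (Set.inclusion_injective (Finset.coe_subset.2 hAB))
  have hindepB : iIndepFun (fun e : {x // x ∈ B} => h e.1) μ :=
    hindep.precomp (Set.inclusion_injective (Finset.coe_subset.2 hBA))
  rw [covariance_eq_integral_measureReal_le
      (Finset.measurable_sup' hA fun e he => hmeas e (hAB he))
      (Finset.measurable_sup' hB fun e he => hmeas e (hBA he))
      (ae_sup'_mem_Icc hA (fun e he => hmeas e (hAB he)) fun e he => hunif e (hAB he))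
      (ae_sup'_mem_Icc hB (fun e he => hmeas e (hBA he)) fun e he => hunif e (hBA he)),
    setIntegral_congr_fun (measurableSet_Icc.prod measurableSet_Icc) fun z hz =>
      measureReal_sup'_le_and_sup'_le_eq hA hB hmeas hindep hunif hz.1 hz.2,
    setIntegral_congr_fun measurableSet_Icc fun s hs => measureReal_sup'_le_eq_pow hA
      (fun e he => hmeas e (hAB he)) hindepA (fun e he => hunif e (hAB he)) hs,
    setIntegral_congr_fun measurableSet_Icc fun t ht => measureReal_sup'_le_eq_pow hB
      (fun e he => hmeas e (hBA he)) hindepB (fun e he => hunif e (hBA he)) ht,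
    integral_Icc_prod_pow_mul_pow_mul_min_pow, integral_Icc_pow, integral_Icc_pow]
  have hcardA : (A \ B).card + (A ∩ B).card = A.card := Finset.card_sdiff_add_card_inter A B
  have hcardB : (B \ A).card + (A ∩ B).card = B.card := by
    rw [Finset.inter_comm]; exact Finset.card_sdiff_add_card_inter B A
  have hcardU : (A \ B).card + (B \ A).card + (A ∩ B).card = (A ∪ B).card := by
    have := Finset.card_union_add_card_inter A B; omega
  rw [← hcardU, ← hcardA, ← hcardB]
  push_cast
  field_simp
  ring

end MaxOfUniforms

theorem cov_max_max
    {Ω ι : Type*} [MeasureSpace Ω] [IsProbabilityMeasure (ℙ : Measure Ω)]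
    [DecidableEq ι]
    (A B : Finset ι) (hA : A.Nonempty) (hB : B.Nonempty)
    (h : ι → Ω → ℝ)
    (hmeas : ∀ e, Measurable (h e))
    (hindep : iIndepFun
      (fun e : {x // x ∈ A ∪ B} => h e.1) ℙ)
    (hunif : ∀ e ∈ A ∪ B, Measure.map (h e) ℙ = volume.restrict (Set.Ioo (0 : ℝ) 1))
    (xA xB : Ω → ℝ)
    (hxA : ∀ ω, xA ω = A.sup' hA fun e => h e ω)
    (hxB : ∀ ω, xB ω = B.sup' hB fun e => h e ω) :
    (∫ ω, xA ω * xB ω ∂ℙ) - (∫ ω, xA ω ∂ℙ) * (∫ ω, xB ω ∂ℙ)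
      = ((A ∩ B).card : ℝ)
        / (((A ∪ B).card + 2) * (A.card + 1) * (B.card + 1)) := by
  obtain rfl : xA = A.sup' hA h := funext fun ω => (hxA ω).trans (Finset.sup'_apply ..).symm
  obtain rfl : xB = B.sup' hB h := funext fun ω => (hxB ω).trans (Finset.sup'_apply ..).symm
  have hA01 := ae_sup'_mem_Icc hA (fun e _ => hmeas e) fun e he =>
    hunif e (Finset.mem_union_left B he)
  have hB01 := ae_sup'_mem_Icc hB (fun e _ => hmeas e) fun e he =>
    hunif e (Finset.mem_union_right A he)
  have hcov := covariance_eq_sub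
    (memLp_of_bounded hA01 (Finset.measurable_sup' hA fun e _ => hmeas e).aestronglyMeasurable 2)
    (memLp_of_bounded hB01 (Finset.measurable_sup' hB fun e _ => hmeas e).aestronglyMeasurable 2)
  simp only [Pi.mul_apply] at hcov
  rw [← hcov]
  exact covariance_sup'_sup' hA hB (fun e _ => hmeas e) hindep hunif
end

section
/- Let a, b, n, u, α, β be positive reals with u = n + α + β, a = n + α, b = n + β, and let Z = αn(a² + αβ) + βn(b² + αβ) + (a² + αβ)(b² + αβ). Then the [3,3] entry of the inverse of the 3×3 matrix F = m·[[β/(u a²) + 1/(uα), 0, −1/(uα)], [0, α/(u b²) + 1/(uβ), −1/(uβ)], [−1/(uα), −1/(uβ), 1/(un) + 1/(uβ) + 1/(uα)]] equals (nu/m) · (b² + αβ)(a² + αβ)/Z. -/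
/-!
`F` is `m` times an arrowhead matrix `!![p, 0, x; 0, q, y; x, y, r]`, so by the cofactor formula
its `[3,3]` inverse entry is `m⁻¹ * p q / (p q r - p y² - q x²)`, the reciprocal of the Schur
complement `r - x²/p - y²/q` of the diagonal block. With the paper's entries the determinant
`p q r - p y² - q x²` equals `Z / (u³ n α β a² b²)`, and clearing denominators gives the formula.
-/

open Matrix

namespace Matrix

variable {K : Type*} [Field K]

theorem inv_smul_of_field {n : Type*} [Fintype n] [DecidableEq n] (c : K) (A : Matrix n n K) :
    (c • A)⁻¹ = c⁻¹ • A⁻¹ := by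
  rcases eq_or_ne c 0 with rfl | hc
  · simp
  by_cases hA : IsUnit A.det
  · simpa [Units.smul_def] using inv_smul' A (Units.mk0 c hc) hA
  · have hcA : ¬IsUnit (c • A).det := by
      simpa [det_smul, isUnit_iff_ne_zero, hc] using hA
    rw [nonsing_inv_apply_not_isUnit _ hA, nonsing_inv_apply_not_isUnit _ hcA, smul_zero]

theorem inv_fin_three_apply_two_two (A : Matrix (Fin 3) (Fin 3) K) :
    A⁻¹ 2 2 = (A 0 0 * A 1 1 - A 0 1 * A 1 0) / A.det := by
  rw [inv_def, smul_apply, adjugate_fin_three, Ring.inverse_eq_inv', smul_eq_mul, div_eq_inv_mul]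
  simp

theorem inv_arrowhead_fin_three_apply_two_two (p q r x y : K) :
    !![p, 0, x; 0, q, y; x, y, r]⁻¹ 2 2 = p * q / (p * q * r - p * y ^ 2 - q * x ^ 2) := by
  rw [inv_fin_three_apply_two_two, det_fin_three]
  simp only [of_apply, cons_val', cons_val_zero, cons_val_fin_one, cons_val_one, cons_val,
    mul_zero, sub_zero, zero_mul, add_zero]
  ring_nf

end Matrix

theorem fisher_inverse_entry_general
    (m a b n u α β Z : ℝ)
    (hα : 0 < α) (hβ : 0 < β) (hn : 0 < n)
    (hu : u = n + α + β) (ha : a = n + α) (hb : b = n + β)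
    (hZ : Z = α * n * (a ^ 2 + α * β) + β * n * (b ^ 2 + α * β)
        + (a ^ 2 + α * β) * (b ^ 2 + α * β))
    (F : Matrix (Fin 3) (Fin 3) ℝ)
    (hF : F = m • !![β / (u * a ^ 2) + 1 / (u * α), 0, -1 / (u * α);
                    0, α / (u * b ^ 2) + 1 / (u * β), -1 / (u * β);
                    -1 / (u * α), -1 / (u * β),
                      1 / (u * n) + 1 / (u * β) + 1 / (u * α)]) :
    F⁻¹ 2 2 = (n * u / m) * ((b ^ 2 + α * β) * (a ^ 2 + α * β)) / Z := by
  have hu0 : 0 < u := by rw [hu]; positivity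
  have ha0 : 0 < a := by rw [ha]; positivity
  have hb0 : 0 < b := by rw [hb]; positivity
  have hZ0 : 0 < Z := by rw [hZ]; positivity
  set p := β / (u * a ^ 2) + 1 / (u * α) with hp
  set q := α / (u * b ^ 2) + 1 / (u * β) with hq
  set r := 1 / (u * n) + 1 / (u * β) + 1 / (u * α) with hr
  have hdet : p * q * r - p * (-1 / (u * β)) ^ 2 - q * (-1 / (u * α)) ^ 2
      = Z / (u ^ 3 * n * α * β * a ^ 2 * b ^ 2) := by
    rw [hp, hq, hr, hZ, hu, ha, hb]
    field_simp
    ring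
  rw [hF, inv_smul_of_field, Matrix.smul_apply, inv_arrowhead_fin_three_apply_two_two, hdet, hp, hq,
    smul_eq_mul]
  field_simp
  ring

/-- The [3,3] entry of the inverse Fisher information matrix of the set
intersection estimation problem. -/
theorem fisher_inverse_entry
    (m a b n u α β Z : ℝ)
    (hm : 0 < m) (hα : 0 < α) (hβ : 0 < β) (hn : 0 < n)
    (hu : u = n + α + β) (ha : a = n + α) (hb : b = n + β)
    (hZ : Z = α * n * (a ^ 2 + α * β) + β * n * (b ^ 2 + α * β)
        + (a ^ 2 + α * β) * (b ^ 2 + α * β))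
    (F : Matrix (Fin 3) (Fin 3) ℝ)
    (hF : F = m • !![β / (u * a ^ 2) + 1 / (u * α), 0, -1 / (u * α);
                    0, α / (u * b ^ 2) + 1 / (u * β), -1 / (u * β);
                    -1 / (u * α), -1 / (u * β),
                      1 / (u * n) + 1 / (u * β) + 1 / (u * α)]) :
    F⁻¹ 2 2 = (n * u / m) * ((b ^ 2 + α * β) * (a ^ 2 + α * β)) / Z :=
  fisher_inverse_entry_general m a b n u α β Z hα hβ hn hu ha hb hZ F hF
end
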